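/- Let E^N_{ℓ,0} = {I_{N,r} : 0 ≤ r ≤ 2^{N−ℓ}−1} be the lowermost level of the subtree T^N_{ℓ,0}. Then the Carleson constant of its image under the postorder rearrangement satisfies ⟦τ_N(E^N_{ℓ,0})⟧ ≥ (N − ℓ)/2 + 1 ≥ (N − ℓ + 1)/2. -/

import Mathlib

open Finset

/-- The set of dyadic intervals in `[0,1]` of length `≥ 2^{-N}`, encoded as
pairs `(ℓ, k)` with `ℓ ≤ N` and `k < 2^ℓ`, representing `I_{ℓ,k} = [k/2^ℓ, (k+1)/2^ℓ)`. -/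
def DN (N : ℕ) : Finset (ℕ × ℕ) :=
  (Finset.range (N + 1) ×ˢ Finset.range (2 ^ N)).filter fun p => p.2 < 2 ^ p.1

/-- `subInt q p` means the dyadic interval encoded by `q` is contained in the one
encoded by `p`. -/
def subInt (q p : ℕ × ℕ) : Prop := p.1 ≤ q.1 ∧ q.2 / 2 ^ (q.1 - p.1) = p.2

instance (q p : ℕ × ℕ) : Decidable (subInt q p) :=
  inferInstanceAs (Decidable (_ ∧ _))

/-- Postorder on dyadic intervals: `q ⪯ p` iff `q ⊆ p`, or they are disjoint with
`q` to the left of `p`. -/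
def postLE (q p : ℕ × ℕ) : Prop :=
  subInt q p ∨ (q.2 + 1) * 2 ^ p.1 ≤ p.2 * 2 ^ q.1

instance (q p : ℕ × ℕ) : Decidable (postLE q p) :=
  inferInstanceAs (Decidable (_ ∨ _))

/-- Lexicographic order: first by level, then by position. -/
def lexLE (q p : ℕ × ℕ) : Prop := q.1 < p.1 ∨ (q.1 = p.1 ∧ q.2 ≤ p.2)

instance (q p : ℕ × ℕ) : Decidable (lexLE q p) :=
  inferInstanceAs (Decidable (_ ∨ _))

/-- Postorder ordinal number (starting at 1) of the interval `p` in `D_N`. -/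
def postOrdinal (N : ℕ) (p : ℕ × ℕ) : ℕ :=
  ((DN N).filter fun q => postLE q p).card

/-- Lexicographic ordinal number (starting at 1) of the interval `p` in `D_N`. -/
def lexOrdinal (N : ℕ) (p : ℕ × ℕ) : ℕ :=
  ((DN N).filter fun q => lexLE q p).card

/-- Length of the dyadic interval encoded by `p`: `2^{-ℓ}`. -/
noncomputable def len (p : ℕ × ℕ) : ℝ := (2 : ℝ)⁻¹ ^ p.1

/-- Carleson constant of a finite collection of (encoded) dyadic intervals;
`sSup ∅ = 0` in `ℝ`, so the empty collection gets `0`. -/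
noncomputable def carleson (C : Finset (ℕ × ℕ)) : ℝ :=
  sSup {v : ℝ | ∃ p ∈ C, v = (∑ q ∈ C.filter (fun q => subInt q p), len q) / len p}

/-- The complete dyadic subtree `T^N_{ℓ,k} = {I ∈ D_N : I ⊆ I_{ℓ,k}}`. -/
def subtreeT (N ℓ k : ℕ) : Finset (ℕ × ℕ) :=
  (DN N).filter fun q => subInt q (ℓ, k)

/-!
The lexicographic ordinal of `I_{j,k}` is `2^j + k`, so its bit length is `j + 1`. The postorder
ordinal of the bottom interval `I_{N,r}` is `1 + ∑_{i ≤ N} ⌊r / 2^i⌋`, which lies in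
`[2^s, 2^{s+1})` for `s = Nat.size r`, because `2^s - 1 ≤ ∑_i ⌊r / 2^i⌋ < 2r`.
Hence `τ_N` maps `I_{N,r}` to an interval of level `Nat.size r`: `I_{N,0}` goes to `[0,1)` and
the `2^{s-1}` intervals with `Nat.size r = s` go to level `s`. Testing the Carleson constant
at `[0,1)`, the image of `E^N_{ℓ,0}` has total length `1 + ∑_{s=1}^{N-ℓ} 2^{s-1} 2^{-s}`.
-/

theorem mem_DN {N : ℕ} {p : ℕ × ℕ} : p ∈ DN N ↔ p.1 ≤ N ∧ p.2 < 2 ^ p.1 := by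
  simp only [DN, mem_filter, mem_product, mem_range, Nat.lt_succ_iff]
  constructor
  · exact fun h => ⟨h.1.1, h.2⟩
  · exact fun h => ⟨⟨h.1, h.2.trans_le (Nat.pow_le_pow_right two_pos h.1)⟩, h.2⟩

theorem card_filter_DN (N : ℕ) (P : ℕ × ℕ → Prop) [DecidablePred P] :
    #{p ∈ DN N | P p} = ∑ j ∈ range (N + 1), #{k ∈ range (2 ^ j) | P (j, k)} := by
  have hDN : {p ∈ DN N | P p} = Finset.map (Equiv.sigmaEquivProd ℕ ℕ).toEmbedding
      ((range (N + 1)).sigma fun j => {k ∈ range (2 ^ j) | P (j, k)}) := by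
    ext ⟨j, k⟩
    simp [mem_DN, and_assoc]
  rw [hDN, card_map, card_sigma]

theorem lexOrdinal_eq {N : ℕ} {p : ℕ × ℕ} (hp : p ∈ DN N) :
    lexOrdinal N p = 2 ^ p.1 + p.2 := by
  obtain ⟨j, k⟩ := p
  obtain ⟨hj, hk⟩ : j ≤ N ∧ k < 2 ^ j := mem_DN.mp hp
  have hlevel : ∀ i, #{k' ∈ range (2 ^ i) | lexLE (i, k') (j, k)} =
      if i < j then 2 ^ i else if i = j then k + 1 else 0 := by
    intro i
    split_ifs with hlt heq
    · simp [lexLE, hlt]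
    · subst heq
      rw [show {k' ∈ range (2 ^ i) | lexLE (i, k') (i, k)} = range (k + 1) by
        ext k'; simp [lexLE]; omega, card_range]
    · rw [card_eq_zero, filter_eq_empty_iff]
      simp only [lexLE]
      omega
  obtain ⟨d, rfl⟩ := Nat.exists_eq_add_of_le hj
  rw [lexOrdinal, card_filter_DN, sum_congr rfl fun i _ => hlevel i, add_right_comm,
    sum_range_add, sum_range_succ, sum_congr rfl fun i hi => if_pos (mem_range.mp hi)]
  have hgeom : ∑ i ∈ range j, 2 ^ i = 2 ^ j - 1 := by simpa using Nat.geomSum_eq le_rfl j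
  have htail : ∑ x ∈ range d, (if j + 1 + x < j then 2 ^ (j + 1 + x)
      else if j + 1 + x = j then k + 1 else 0) = 0 :=
    sum_eq_zero fun x _ => by rw [if_neg (by omega), if_neg (by omega)]
  rw [hgeom, htail, if_neg (lt_irrefl j), if_pos rfl]
  have := Nat.one_le_two_pow (n := j)
  dsimp only
  omega

theorem postOrdinal_bottom {N r : ℕ} (hr : r < 2 ^ N) :
    postOrdinal N (N, r) = ∑ i ∈ range (N + 1), r / 2 ^ i + 1 := by
  have hlevel : ∀ j ∈ range (N + 1), #{k ∈ range (2 ^ j) | postLE (j, k) (N, r)} =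
      r / 2 ^ (N - j) + if j = N then 1 else 0 := by
    intro j hj
    have hj : j ≤ N := Nat.lt_succ_iff.mp (mem_range.mp hj)
    have hpow : 2 ^ N = 2 ^ (N - j) * 2 ^ j := by rw [← pow_add, Nat.sub_add_cancel hj]
    have hleft : ∀ k, (k + 1) * 2 ^ N ≤ r * 2 ^ j ↔ k < r / 2 ^ (N - j) := fun k => by
      rw [hpow, ← mul_assoc, Nat.mul_le_mul_right_iff (Nat.two_pow_pos j),
        ← Nat.le_div_iff_mul_le (Nat.two_pow_pos _), Nat.add_one_le_iff]
    split_ifs with hjN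
    · subst hjN
      rw [show {k ∈ range (2 ^ j) | postLE (j, k) (j, r)} = range (r + 1) by
        ext k; simp [postLE, subInt, hleft]; omega, card_range]
      simp
    · have hq : r / 2 ^ (N - j) < 2 ^ j :=
        (Nat.div_lt_iff_lt_mul (Nat.two_pow_pos _)).2 (by rwa [mul_comm, ← hpow])
      rw [show {k ∈ range (2 ^ j) | postLE (j, k) (N, r)} = range (r / 2 ^ (N - j)) by
        ext k; simp [postLE, subInt, hleft]; omega, card_range, add_zero]
  rw [postOrdinal, card_filter_DN, sum_congr rfl hlevel, sum_add_distrib, sum_ite_eq',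
    if_pos (self_mem_range_succ N), ← sum_range_reflect, add_tsub_cancel_right]
  exact congrArg (· + 1) <| sum_congr rfl fun i hi => by
    rw [Nat.sub_sub_self (Nat.lt_succ_iff.mp (mem_range.mp hi))]

theorem sum_range_succ_div_two_pow (M r : ℕ) :
    ∑ i ∈ range (M + 1), r / 2 ^ i = r + ∑ i ∈ range M, r / 2 / 2 ^ i := by
  rw [sum_range_succ', add_comm]
  simp only [pow_zero, Nat.div_one, pow_succ', Nat.div_div_eq_div_mul]

theorem sum_range_div_two_pow_lt (M : ℕ) {r : ℕ} (hr : 0 < r) :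
    ∑ i ∈ range M, r / 2 ^ i < 2 * r := by
  induction M generalizing r with
  | zero => simpa using hr
  | succ M ih =>
    rw [sum_range_succ_div_two_pow]
    rcases Nat.eq_zero_or_pos (r / 2) with h | h
    · simp only [h, Nat.zero_div, sum_const_zero]
      omega
    · have := ih h
      omega

theorem two_pow_succ_le_sum_range_div_two_pow {M r t : ℕ} (ht : t < M) (hr : 2 ^ t ≤ r) :
    2 ^ (t + 1) ≤ ∑ i ∈ range M, r / 2 ^ i + 1 := by
  induction M generalizing r t with
  | zero => omega
  | succ M ih =>
    rw [sum_range_succ_div_two_pow]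
    cases t with
    | zero =>
      simp only [zero_add, pow_one, pow_zero] at hr ⊢
      omega
    | succ t =>
      have hr2 : 2 ^ t ≤ r / 2 := (Nat.le_div_iff_mul_le two_pos).2 (by rwa [← pow_succ])
      have := ih (Nat.lt_of_succ_lt_succ ht) hr2
      have hpow : 2 ^ (t + 1 + 1) = 2 * 2 ^ (t + 1) := pow_succ' 2 (t + 1)
      omega

theorem Nat.size_eq_succ_iff {n j : ℕ} : n.size = j + 1 ↔ 2 ^ j ≤ n ∧ n < 2 ^ (j + 1) := by
  rw [← Nat.lt_size, ← Nat.size_le]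
  omega

theorem size_sum_range_div_two_pow_add_one {M r : ℕ} (hr : r < 2 ^ M) :
    (∑ i ∈ range M, r / 2 ^ i + 1).size = r.size + 1 := by
  rcases Nat.eq_zero_or_pos r with rfl | hpos
  · simp
  obtain ⟨s, hs⟩ := Nat.exists_eq_add_of_lt (Nat.size_pos.2 hpos)
  rw [zero_add] at hs
  obtain ⟨hlo, hhi⟩ := Nat.size_eq_succ_iff.1 hs
  rw [hs, Nat.size_eq_succ_iff]
  refine ⟨two_pow_succ_le_sum_range_div_two_pow ?_ hlo, ?_⟩
  · exact (Nat.pow_lt_pow_iff_right one_lt_two).1 (hlo.trans_lt hr)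
  · have := sum_range_div_two_pow_lt M hpos
    rw [pow_succ]
    omega

theorem Nat.size_two_pow_add {j k : ℕ} (hk : k < 2 ^ j) : (2 ^ j + k).size = j + 1 :=
  Nat.size_eq_succ_iff.2 ⟨Nat.le_add_right _ _, by rw [pow_succ]; omega⟩

theorem sum_range_two_pow_inv_pow_size (m : ℕ) :
    ∑ r ∈ range (2 ^ m), (2⁻¹ : ℝ) ^ r.size = 1 + m / 2 := by
  induction m with
  | zero => simp
  | succ m ih =>
    rw [pow_succ, mul_two, sum_range_add, ih,
      sum_congr rfl fun x hx => by rw [Nat.size_two_pow_add (mem_range.1 hx)], sum_const,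
      card_range, nsmul_eq_mul, Nat.cast_pow, pow_succ, ← mul_assoc, ← mul_pow]
    norm_num
    ring

section Rearrangement

variable {N : ℕ} {τ : ℕ × ℕ → ℕ × ℕ}

theorem fst_apply_bottom_eq_size (hmaps : Set.MapsTo τ (DN N) (DN N))
    (hτ : ∀ p ∈ DN N, lexOrdinal N (τ p) = postOrdinal N p) {r : ℕ} (hr : r < 2 ^ N) :
    (τ (N, r)).1 = r.size := by
  have hp : (N, r) ∈ DN N := mem_DN.2 ⟨le_rfl, hr⟩
  have hord := congrArg Nat.size (hτ _ hp)
  rw [lexOrdinal_eq (hmaps hp), Nat.size_two_pow_add (mem_DN.1 (hmaps hp)).2,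
    postOrdinal_bottom hr,
    size_sum_range_div_two_pow_add_one (hr.trans (Nat.pow_lt_pow_succ one_lt_two))] at hord
  omega

theorem apply_bottom_zero_eq (hmaps : Set.MapsTo τ (DN N) (DN N))
    (hτ : ∀ p ∈ DN N, lexOrdinal N (τ p) = postOrdinal N p) : τ (N, 0) = (0, 0) := by
  have hp : (N, 0) ∈ DN N := mem_DN.2 ⟨le_rfl, Nat.two_pow_pos N⟩
  have hlevel := fst_apply_bottom_eq_size hmaps hτ (Nat.two_pow_pos N)
  have hpos := (mem_DN.1 (hmaps hp)).2
  rw [hlevel, Nat.size_zero, pow_zero, Nat.lt_one_iff] at hpos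
  exact Prod.ext hlevel hpos

end Rearrangement

theorem le_carleson {C : Finset (ℕ × ℕ)} {p : ℕ × ℕ} (hp : p ∈ C) :
    (∑ q ∈ C.filter (fun q => subInt q p), len q) / len p ≤ carleson C := by
  refine le_csSup (Set.Finite.bddAbove ?_) ⟨p, hp, rfl⟩
  exact (C.finite_toSet.image _).subset fun _ ⟨q, hq, hv⟩ => ⟨q, hq, hv.symm⟩

theorem sum_len_le_carleson {C : Finset (ℕ × ℕ)} (hC : ∀ q ∈ C, q.2 < 2 ^ q.1)
    (h0 : (0, 0) ∈ C) :
    ∑ q ∈ C, len q ≤ carleson C := by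
  have hsub : ∀ q ∈ C, subInt q (0, 0) := fun q hq =>
    ⟨Nat.zero_le _, Nat.div_eq_of_lt (hC q hq)⟩
  simpa [len, filter_true_of_mem hsub] using le_carleson h0

theorem tau_lowermost_left_general (N ℓ : ℕ) (τ : ℕ × ℕ → ℕ × ℕ)
    (hbij : Set.BijOn τ (DN N) (DN N))
    (hτ : ∀ p ∈ DN N, lexOrdinal N (τ p) = postOrdinal N p) :
    carleson (((Finset.range (2 ^ (N - ℓ))).image fun r => ((N, r) : ℕ × ℕ)).image τ)
        ≥ ((N : ℝ) - ℓ) / 2 + 1 ∧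
    ((N : ℝ) - ℓ) / 2 + 1 ≥ ((N : ℝ) - ℓ + 1) / 2 := by
  have hbot : ∀ r ∈ range (2 ^ (N - ℓ)), (N, r) ∈ DN N := fun r hr =>
    mem_DN.2 ⟨le_rfl, (mem_range.1 hr).trans_le (Nat.pow_le_pow_right two_pos (N.sub_le ℓ))⟩
  have hinj : Set.InjOn (fun r => τ (N, r)) (range (2 ^ (N - ℓ))) := fun r hr s hs h =>
    (Prod.mk.inj (hbij.injOn (hbot r hr) (hbot s hs) h)).2
  rw [image_image, Function.comp_def]
  have hsum : ∑ q ∈ (range (2 ^ (N - ℓ))).image (fun r => τ (N, r)), len q =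
      1 + (N - ℓ : ℕ) / 2 := by
    rw [sum_image hinj, ← sum_range_two_pow_inv_pow_size]
    exact sum_congr rfl fun r hr => by
      rw [len, fst_apply_bottom_eq_size hbij.mapsTo hτ (mem_DN.1 (hbot r hr)).2]
  have hcarleson := sum_len_le_carleson
    (forall_mem_image.2 fun r hr => (mem_DN.1 (hbij.mapsTo (hbot r hr))).2)
    (mem_image.2 ⟨0, mem_range.2 (Nat.two_pow_pos _), apply_bottom_zero_eq hbij.mapsTo hτ⟩)
  have hcast : (N : ℝ) - ℓ ≤ (N - ℓ : ℕ) :=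
    sub_le_iff_le_add.2 (by exact_mod_cast le_tsub_add)
  constructor <;> linarith

/-- `⟦τ_N(E^N_{ℓ,0})⟧ ≥ (N-ℓ)/2 + 1 ≥ (N-ℓ+1)/2`, where `E^N_{ℓ,0}` is the
lowermost level of the subtree `T^N_{ℓ,0}` and `τ_N` is the postorder rearrangement. -/
theorem tau_lowermost_left (N ℓ : ℕ) (hℓ : ℓ ≤ N) (τ : ℕ × ℕ → ℕ × ℕ)
    (hbij : Set.BijOn τ (DN N) (DN N))
    (hτ : ∀ p ∈ DN N, lexOrdinal N (τ p) = postOrdinal N p) :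
    carleson (((Finset.range (2 ^ (N - ℓ))).image fun r => ((N, r) : ℕ × ℕ)).image τ)
        ≥ ((N : ℝ) - ℓ) / 2 + 1 ∧
    ((N : ℝ) - ℓ) / 2 + 1 ≥ ((N : ℝ) - ℓ + 1) / 2 :=
  tau_lowermost_left_general N ℓ τ hbij hτ
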